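/- For every finite tree G with boundary δG containing x, one has σ(G,x)=σ̂(G,x). -/

import Mathlib

/-!
Both infima equal the least Rayleigh quotient `λ₀` of `∑_{edges} (g a - g b)² / ∑_{δG∖x} g²`
over `g` with `g x = 0`. By Green's identity every `λ ∈ Σ̂(G,x)` is such a quotient, so
`λ₀ ≤ σ̂(G,x)`. A minimizer `f` exists by compactness. Replacing it by its total variation
`g v = ∑ |f b - f a|` along the path from `x` to `v` keeps the energy and does not decrease the
boundary term, so `g` is again a minimizer, hence (Euler–Lagrange) a `λ₀`-flow, nondecreasing away
from `x`. By the strong minimum principle `g > 0` off `x`; an edge on which `g` is level would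
propagate away from `x` to a leaf `y`, where the Robin condition `g y - g z = λ₀ g y > 0` fails.
So `g` is strictly increasing and `λ₀ ∈ Σ(G,x)`.
-/

open Finset

attribute [local instance] Classical.propDecidable

namespace Steklov

variable {V : Type} [Fintype V] [DecidableEq V]

/-- The boundary of a graph: the set of vertices of degree one. -/
noncomputable def bdry (G : SimpleGraph V) : Finset V :=
  Finset.univ.filter (fun v => G.degree v = 1)

/-- The graph Laplacian `Δf(x) = Σ_{y∼x} (f x - f y)`. -/
noncomputable def lap (G : SimpleGraph V) (f : V → ℝ) (x : V) : ℝ :=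
  ∑ y ∈ G.neighborFinset x, (f x - f y)

/-- `f` is a Steklov eigenfunction of `G` with eigenvalue `lam`:
`f ≠ 0`, `Δf = 0` on the interior and `∂f/∂n = lam • f` on the boundary. -/
noncomputable def IsEigenpair (G : SimpleGraph V) (lam : ℝ) (f : V → ℝ) : Prop :=
  f ≠ 0 ∧ (∀ x, x ∉ bdry G → lap G f x = 0) ∧ ∀ x ∈ bdry G, lap G f x = lam * f x

/-- The first nonzero Steklov eigenvalue of `G`. -/
noncomputable def lambda2 (G : SimpleGraph V) : ℝ :=
  sInf {lam : ℝ | 0 < lam ∧ ∃ f : V → ℝ, IsEigenpair G lam f}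

/-- `f` is a `lam`-flow to `x` on `G`. -/
noncomputable def IsFlow (G : SimpleGraph V) (lam : ℝ) (x : V) (f : V → ℝ) : Prop :=
  f ≠ 0 ∧ (∀ w, w ∉ bdry G → w ≠ x → lap G f w = 0) ∧
    ∀ w ∈ bdry G, w ≠ x → lap G f w = lam * f w

/-- The Rayleigh quotient of `f` (sum over undirected edges in the numerator). -/
noncomputable def rayleigh (G : SimpleGraph V) (f : V → ℝ) : ℝ :=
  ((∑ x, ∑ y ∈ G.neighborFinset x, (f x - f y) ^ 2) / 2) / ∑ x ∈ bdry G, f x ^ 2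

/-- `Σ(G,x)`: the set of `lam ≥ 0` admitting a `lam`-flow `f` to `x` with `f x = 0`
which increases along edges pointing away from `x`. -/
def SigmaSet (G : SimpleGraph V) (x : V) : Set ℝ :=
  {lam | 0 ≤ lam ∧ ∃ f : V → ℝ, IsFlow G lam x f ∧ f x = 0 ∧
    ∀ y z : V, G.Adj y z → G.dist x z < G.dist x y → f z < f y}

/-- `Σ̂(G,x)`: the set of `lam ≥ 0` admitting a `lam`-flow `f` to `x` with `f x = 0`. -/
def SigmaHatSet (G : SimpleGraph V) (x : V) : Set ℝ :=
  {lam | 0 ≤ lam ∧ ∃ f : V → ℝ, IsFlow G lam x f ∧ f x = 0}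

/-- `σ(G,x) = inf Σ(G,x)`. -/
noncomputable def sigma (G : SimpleGraph V) (x : V) : ℝ := sInf (SigmaSet G x)

/-- `σ̂(G,x) = inf Σ̂(G,x)`. -/
noncomputable def sigmaHat (G : SimpleGraph V) (x : V) : ℝ := sInf (SigmaHatSet G x)

/-- The vertex set of the branch from `(u,v)`: the connected component of `u`
after deleting the edge between `u` and `v`. -/
def branchSet (G : SimpleGraph V) (u v : V) : Set V :=
  {w | (G.deleteEdges {s(u, v)}).Reachable u w}

/-- The vertex set of the subtree `H(u,v)` spanned by the branch from `(u,v)` together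
with `v`. -/
def branchClosed (G : SimpleGraph V) (u v : V) : Set V :=
  insert v (branchSet G u v)

/-- `σ(H(u,v), v)`, computed intrinsically in the subtree `H(u,v)`. -/
noncomputable def sigmaB (G : SimpleGraph V) (u v : V) : ℝ :=
  sigma (G.induce (branchClosed G u v)) ⟨v, Set.mem_insert _ _⟩

/-- The double `(G)²_x` of `G` at `x`: two disjoint copies of `G` with the two
copies of `x` identified. -/
def doubleAt (G : SimpleGraph V) (x : V) : SimpleGraph (V ⊕ {v : V // v ≠ x}) where
  Adj a b :=
    match a, b with
    | Sum.inl u, Sum.inl w => G.Adj u w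
    | Sum.inr u, Sum.inr w => G.Adj u.1 w.1
    | Sum.inl u, Sum.inr w => u = x ∧ G.Adj x w.1
    | Sum.inr u, Sum.inl w => w = x ∧ G.Adj x u.1
  symm := by
    constructor
    rintro (u | u) (w | w) h
    · exact h.symm
    · exact h
    · exact h
    · exact h.symm
  loopless := by
    constructor
    rintro (u | u) h
    · exact G.loopless.irrefl u h
    · exact G.loopless.irrefl u.1 h


end Steklov

namespace SimpleGraph

variable {V : Type*} {G : SimpleGraph V}

namespace Walk

variable (f : V → ℝ)

def variation {u v : V} (p : G.Walk u v) : ℝ :=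
  (p.darts.map fun d => |f d.snd - f d.fst|).sum

lemma abs_sub_le_variation {u v : V} (p : G.Walk u v) : |f v - f u| ≤ p.variation f := by
  induction p with
  | nil => simp [variation]
  | cons h p ih =>
    simp only [variation, darts_cons, List.map_cons, List.sum_cons] at ih ⊢
    exact (abs_sub_le _ _ _).trans (by rw [add_comm]; exact add_le_add_right ih _)

lemma variation_le_length_mul {c : ℝ} (hc : ∀ a b, G.Adj a b → |f b - f a| ≤ c) {u v : V}
    (p : G.Walk u v) : p.variation f ≤ p.length * c := by
  have := List.sum_le_card_nsmul (p.darts.map fun d => |f d.snd - f d.fst|) c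
    (by simpa using fun d _ => hc _ _ d.adj)
  simpa [variation, nsmul_eq_mul] using this

lemma variation_concat {u v w : V} (p : G.Walk u v) (h : G.Adj v w) :
    (p.concat h).variation f = p.variation f + |f w - f v| := by
  simp [variation, darts_concat]

lemma variation_nonneg {u v : V} (p : G.Walk u v) : 0 ≤ p.variation f :=
  List.sum_nonneg (by simp)

end Walk

namespace Connected

variable (hG : G.Connected)

noncomputable def geodesic (u v : V) : G.Walk u v :=
  (hG.exists_path_of_dist u v).choose

lemma isPath_geodesic (u v : V) : (hG.geodesic u v).IsPath :=
  (hG.exists_path_of_dist u v).choose_spec.1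

lemma length_geodesic (u v : V) : (hG.geodesic u v).length = G.dist u v :=
  (hG.exists_path_of_dist u v).choose_spec.2

variable (x : V) (f : V → ℝ)

noncomputable def variationFrom (v : V) : ℝ := (hG.geodesic x v).variation f

lemma variationFrom_self : hG.variationFrom x f x = 0 := by
  have : (hG.geodesic x x).darts = [] := List.eq_nil_of_length_eq_zero <| by
    rw [Walk.length_darts, length_geodesic, dist_self]
  simp [variationFrom, Walk.variation, this]

lemma abs_sub_le_variationFrom (v : V) : |f v - f x| ≤ hG.variationFrom x f v :=
  Walk.abs_sub_le_variation f _

lemma variationFrom_nonneg (v : V) : 0 ≤ hG.variationFrom x f v :=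
  Walk.variation_nonneg f _

end Connected

namespace IsTree

lemma geodesic_eq_concat (hG : G.IsTree) (x : V) {y z : V} (h : G.Adj z y)
    (hd : G.dist x z < G.dist x y) :
    hG.connected.geodesic x y = (hG.connected.geodesic x z).concat h := by
  have hy : y ∉ (hG.connected.geodesic x z).support := fun hy => by
    have := (dist_le (_ : G.Walk x y)).trans
      ((hG.connected.geodesic x z).length_takeUntil_le_length hy)
    rw [Connected.length_geodesic] at this
    omega
  exact (hG.existsUnique_path x y).unique (hG.connected.isPath_geodesic x y)
    ((hG.connected.isPath_geodesic x z).concat hy h)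

lemma eq_of_adj_of_dist_lt (hG : G.IsTree) {x v u w : V} (hu : G.Adj u v) (hw : G.Adj w v)
    (hud : G.dist x u < G.dist x v) (hwd : G.dist x w < G.dist x v) : u = w := by
  have := (hG.geodesic_eq_concat x hu hud).symm.trans (hG.geodesic_eq_concat x hw hwd)
  exact (Walk.concat_inj this).1

variable (x : V) (f : V → ℝ)

lemma variationFrom_eq_add_of_adj (hG : G.IsTree) {y z : V} (h : G.Adj z y)
    (hd : G.dist x z < G.dist x y) :
    hG.connected.variationFrom x f y = hG.connected.variationFrom x f z + |f y - f z| := by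
  rw [Connected.variationFrom, hG.geodesic_eq_concat x h hd, Walk.variation_concat]
  rfl

lemma abs_sub_variationFrom_eq_add_of_adj (hG : G.IsTree) {a b : V} (h : G.Adj a b) :
    |hG.connected.variationFrom x f a - hG.connected.variationFrom x f b| = |f a - f b| := by
  rcases hG.dist_eq_dist_add_one_of_adj x h with hd | hd
  · rw [hG.variationFrom_eq_add_of_adj x f h.symm (by omega), add_sub_cancel_left, abs_abs]
  · rw [hG.variationFrom_eq_add_of_adj x f h (by omega), sub_add_cancel_left, abs_neg, abs_abs,
      abs_sub_comm]

end IsTree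

end SimpleGraph

namespace Steklov

open SimpleGraph Matrix

variable {V : Type} [Fintype V] [DecidableEq V] {G : SimpleGraph V}

lemma lap_eq_lapMatrix_mulVec (G : SimpleGraph V) (f : V → ℝ) : lap G f = G.lapMatrix ℝ *ᵥ f := by
  ext v
  rw [lapMatrix_mulVec_apply, lap, sum_sub_distrib, sum_const,
    card_neighborFinset_eq_degree, nsmul_eq_mul]

noncomputable def energy (G : SimpleGraph V) (f : V → ℝ) : ℝ := f ⬝ᵥ (G.lapMatrix ℝ *ᵥ f)

noncomputable def bdryEnergy (G : SimpleGraph V) (x : V) (f : V → ℝ) : ℝ :=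
  ∑ w ∈ (bdry G).erase x, f w ^ 2

lemma energy_eq_sum_sq (G : SimpleGraph V) (f : V → ℝ) :
    energy G f = (∑ i, ∑ j, if G.Adj i j then (f i - f j) ^ 2 else 0) / 2 := by
  rw [energy, ← toLinearMap₂'_apply', lapMatrix_toLinearMap₂']

lemma sq_sub_le_energy {a b : V} (hab : G.Adj a b) (f : V → ℝ) :
    (f a - f b) ^ 2 ≤ 2 * energy G f := by
  have hterm : ∀ i j, 0 ≤ if G.Adj i j then (f i - f j) ^ 2 else 0 := fun i j => by
    split_ifs <;> positivity
  rw [energy_eq_sum_sq, mul_div_cancel₀ _ two_ne_zero]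
  calc (f a - f b) ^ 2 = if G.Adj a b then (f a - f b) ^ 2 else 0 := (if_pos hab).symm
    _ ≤ ∑ j, if G.Adj a j then (f a - f j) ^ 2 else 0 :=
      single_le_sum (fun j _ => hterm a j) (mem_univ b)
    _ ≤ _ := single_le_sum (f := fun i => ∑ j, _) (fun i _ => sum_nonneg fun j _ => hterm i j)
      (mem_univ a)

lemma energy_nonneg (G : SimpleGraph V) (f : V → ℝ) : 0 ≤ energy G f := by
  rw [energy_eq_sum_sq]
  refine div_nonneg (sum_nonneg fun i _ => sum_nonneg fun j _ => ?_) zero_le_two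
  split_ifs <;> positivity

lemma eq_zero_of_energy_eq_zero (hG : G.Connected) {x : V} {f : V → ℝ} (hfx : f x = 0)
    (hf : energy G f = 0) : f = 0 := by
  rw [energy, ← toLinearMap₂'_apply',
    lapMatrix_toLinearMap₂'_apply'_eq_zero_iff_forall_reachable] at hf
  ext v
  rw [← hf x v (hG x v), hfx, Pi.zero_apply]

lemma energy_add_smul (G : SimpleGraph V) (f h : V → ℝ) (t : ℝ) :
    energy G (f + t • h) =
      energy G f + 2 * t * (h ⬝ᵥ (G.lapMatrix ℝ *ᵥ f)) + t ^ 2 * energy G h := by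
  have hsymm : f ⬝ᵥ (G.lapMatrix ℝ *ᵥ h) = h ⬝ᵥ (G.lapMatrix ℝ *ᵥ f) := by
    rw [dotProduct_mulVec, ← mulVec_transpose, isSymm_lapMatrix, dotProduct_comm]
  simp only [energy, mulVec_add, mulVec_smul, dotProduct_add, add_dotProduct, dotProduct_smul,
    smul_dotProduct, hsymm, smul_eq_mul]
  ring

lemma energy_smul (G : SimpleGraph V) (t : ℝ) (f : V → ℝ) :
    energy G (t • f) = t ^ 2 * energy G f := by
  simp only [energy, mulVec_smul, dotProduct_smul, smul_dotProduct, smul_eq_mul]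
  ring

lemma bdryEnergy_add_smul (G : SimpleGraph V) (x : V) (f h : V → ℝ) (t : ℝ) :
    bdryEnergy G x (f + t • h) =
      bdryEnergy G x f + 2 * t * ∑ w ∈ (bdry G).erase x, f w * h w +
        t ^ 2 * bdryEnergy G x h := by
  simp only [bdryEnergy, mul_sum, ← sum_add_distrib, Pi.add_apply, Pi.smul_apply, smul_eq_mul]
  exact sum_congr rfl fun w _ => by ring

lemma bdryEnergy_smul (G : SimpleGraph V) (x : V) (t : ℝ) (f : V → ℝ) :
    bdryEnergy G x (t • f) = t ^ 2 * bdryEnergy G x f := by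
  simp only [bdryEnergy, mul_sum, Pi.smul_apply, smul_eq_mul]
  exact sum_congr rfl fun w _ => by ring

lemma continuous_energy (G : SimpleGraph V) : Continuous (energy G) := by
  unfold energy; fun_prop

lemma continuous_bdryEnergy (G : SimpleGraph V) (x : V) : Continuous (bdryEnergy G x) := by
  unfold bdryEnergy; fun_prop

def IsRayleighBound (G : SimpleGraph V) (x : V) (lam : ℝ) : Prop :=
  ∀ g : V → ℝ, g x = 0 → lam * bdryEnergy G x g ≤ energy G g

namespace IsRayleighBound

variable {x : V} {lam : ℝ} {f : V → ℝ}

/-- The Euler–Lagrange equation at a minimizer of the Rayleigh quotient. -/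
lemma dotProduct_eq (hb : IsRayleighBound G x lam) (hfx : f x = 0)
    (hf : energy G f = lam * bdryEnergy G x f) {h : V → ℝ} (hhx : h x = 0) :
    h ⬝ᵥ (G.lapMatrix ℝ *ᵥ f) = lam * ∑ w ∈ (bdry G).erase x, f w * h w := by
  set b := 2 * (h ⬝ᵥ (G.lapMatrix ℝ *ᵥ f) - lam * ∑ w ∈ (bdry G).erase x, f w * h w)
  have hquad : ∀ t : ℝ, 0 ≤ (energy G h - lam * bdryEnergy G x h) * (t * t) + b * t + 0 := by
    intro t
    have := hb (f + t • h) (by simp [hfx, hhx])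
    rw [energy_add_smul, bdryEnergy_add_smul] at this
    linear_combination this + hf
  have := discrim_le_zero hquad
  rw [discrim, mul_zero, sub_zero] at this
  have hb0 : b = 0 := pow_eq_zero_iff two_ne_zero |>.mp (le_antisymm this (sq_nonneg b))
  linear_combination hb0 / 2

lemma isFlow (hb : IsRayleighBound G x lam) (hfx : f x = 0)
    (hf : energy G f = lam * bdryEnergy G x f) (hf0 : f ≠ 0) : IsFlow G lam x f := by
  have hlap : ∀ w, w ≠ x → lap G f w = lam * if w ∈ (bdry G).erase x then f w else 0 := by
    intro w hw
    have := hb.dotProduct_eq hfx hf (h := Pi.single w 1) (Pi.single_eq_of_ne' hw 1)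
    simpa only [single_dotProduct, one_mul, ← lap_eq_lapMatrix_mulVec, Pi.single_apply, mul_ite,
      mul_one, mul_zero, sum_ite_eq'] using this
  exact ⟨hf0, fun w hwb hw => by simpa [hwb] using hlap w hw,
    fun w hwb hw => by simpa [hwb, hw] using hlap w hw⟩

end IsRayleighBound

lemma IsFlow.energy_eq {x : V} {lam : ℝ} {f : V → ℝ} (hf : IsFlow G lam x f) (hfx : f x = 0) :
    energy G f = lam * bdryEnergy G x f := by
  have hterm : ∀ v, f v * lap G f v = if v ∈ (bdry G).erase x then lam * f v ^ 2 else 0 := by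
    intro v
    by_cases hvx : v = x
    · simp [hvx, hfx]
    by_cases hvb : v ∈ bdry G
    · rw [if_pos (mem_erase.mpr ⟨hvx, hvb⟩), hf.2.2 v hvb hvx]
      ring
    · rw [if_neg fun h => hvb (mem_erase.mp h).2, hf.2.1 v hvb hvx, mul_zero]
  rw [energy, ← lap_eq_lapMatrix_mulVec, dotProduct, sum_congr rfl fun v _ => hterm v, sum_ite_mem,
    univ_inter, bdryEnergy, mul_sum]

lemma IsRayleighBound.le_of_isFlow (hG : G.Connected) {x : V} {lam mu : ℝ} {f : V → ℝ}
    (hb : IsRayleighBound G x lam) (hf : IsFlow G mu x f) (hfx : f x = 0) : lam ≤ mu := by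
  have hE := hf.energy_eq hfx
  have hB : 0 < bdryEnergy G x f := by
    refine (sum_nonneg fun w _ => sq_nonneg (f w)).lt_of_ne fun h0 => hf.1 ?_
    exact eq_zero_of_energy_eq_zero hG hfx (by rw [hE, bdryEnergy, ← h0, mul_zero])
  exact le_of_mul_le_mul_right (hE ▸ hb f hfx) hB


lemma isCompact_setOf_energy_le_one (hG : G.Connected) (x : V) :
    IsCompact {f : V → ℝ | f x = 0 ∧ energy G f ≤ 1} := by
  refine (isCompact_univ_pi fun v => isCompact_Icc (a := -(2 * G.dist x v : ℝ))
    (b := 2 * G.dist x v)).of_isClosed_subset ((isClosed_eq (continuous_apply x)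
      continuous_const).inter (isClosed_le (continuous_energy G) continuous_const)) ?_
  rintro f ⟨hfx, hf⟩ v -
  have hedge : ∀ a b, G.Adj a b → |f b - f a| ≤ 2 := fun a b hab =>
    abs_le_of_sq_le_sq (by nlinarith [sq_sub_le_energy hab.symm f]) zero_le_two
  have := (hG.abs_sub_le_variationFrom x f v).trans (Walk.variation_le_length_mul f hedge _)
  rw [hfx, sub_zero, hG.length_geodesic] at this
  exact abs_le.mp (by linarith)

lemma isRayleighBound_inv (hG : G.Connected) {x : V} {m : ℝ} (hm : 0 < m)
    (h : ∀ f : V → ℝ, f x = 0 → energy G f ≤ 1 → bdryEnergy G x f ≤ m) :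
    IsRayleighBound G x m⁻¹ := by
  intro g hgx
  rw [inv_mul_le_iff₀ hm]
  rcases (energy_nonneg G g).eq_or_lt with hE | hE
  · rw [← hE, mul_zero, eq_zero_of_energy_eq_zero hG hgx hE.symm]
    simp [bdryEnergy]
  -- normalize `g` to unit energy
  set s := (Real.sqrt (energy G g))⁻¹
  have hs : s ^ 2 = (energy G g)⁻¹ := by rw [inv_pow, Real.sq_sqrt hE.le]
  have := h (s • g) (by simp [hgx]) (by rw [energy_smul, hs, inv_mul_cancel₀ hE.ne'])
  rw [bdryEnergy_smul, hs, inv_mul_le_iff₀ hE] at this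
  linarith

lemma energy_single (G : SimpleGraph V) (w : V) : energy G (Pi.single w 1) = G.degree w := by
  rw [energy, single_dotProduct, one_mul, lapMatrix_mulVec_apply, Pi.single_eq_same, mul_one,
    sub_eq_self]
  exact sum_eq_zero fun v hv =>
    Pi.single_eq_of_ne (G.ne_of_adj ((mem_neighborFinset ..).mp hv)).symm 1

lemma exists_isRayleighBound_attained (hG : G.Connected) {x w : V} (hw : w ∈ bdry G) (hwx : w ≠ x) :
    ∃ lam, 0 < lam ∧ IsRayleighBound G x lam ∧
      ∃ f : V → ℝ, f x = 0 ∧ 0 < bdryEnergy G x f ∧ energy G f = lam * bdryEnergy G x f := by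
  have hwK : Pi.single w 1 ∈ {f : V → ℝ | f x = 0 ∧ energy G f ≤ 1} := by
    refine ⟨Pi.single_eq_of_ne hwx.symm 1, ?_⟩
    rw [energy_single, (mem_filter.mp hw).2, Nat.cast_one]
  obtain ⟨f, hfK, hmax⟩ := (isCompact_setOf_energy_le_one hG x).exists_isMaxOn ⟨_, hwK⟩
    (continuous_bdryEnergy G x).continuousOn
  have hBw : bdryEnergy G x (Pi.single w 1) = 1 := by
    simp [bdryEnergy, Pi.single_apply, hw, hwx]
  have hm : 0 < bdryEnergy G x f := one_pos.trans_le (hBw ▸ hmax hwK)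
  have hb := isRayleighBound_inv hG hm fun g hgx hg => hmax ⟨hgx, hg⟩
  refine ⟨_, inv_pos.2 hm, hb, f, hfK.1, hm, le_antisymm ?_ (hb f hfK.1)⟩
  rw [inv_mul_cancel₀ hm.ne']
  exact hfK.2

lemma IsFlow.pos_of_nonneg (hG : G.Connected) {x : V} (hx : x ∈ bdry G) {lam : ℝ} {f : V → ℝ}
    (hf : IsFlow G lam x f) (hnn : 0 ≤ f) {u : V} (hux : u ≠ x) : 0 < f u := by
  obtain ⟨b, -, hb⟩ := degree_eq_one_iff_existsUnique_adj.mp (mem_filter.mp hx).2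
  have hspread : ∀ v w, v ≠ x → f v = 0 → G.Adj v w → f w = 0 := by
    intro v w hvx hv hvw
    have hlap : lap G f v = 0 := by
      by_cases hvb : v ∈ bdry G
      · rw [hf.2.2 v hvb hvx, hv, mul_zero]
      · exact hf.2.1 v hvb hvx
    simp only [lap, hv, zero_sub, sum_neg_distrib, neg_eq_zero] at hlap
    exact (sum_eq_zero_iff_of_nonneg fun w _ => hnn w).mp hlap w (by simpa using hvw)
  -- `x` has the single neighbour `b`, so a walk through `x` passes through `b` on both sides
  have hwalk : ∀ v w (p : G.Walk v w), f v = 0 → (v = x → f b = 0) → f w = 0 := by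
    intro v w p
    induction p with
    | nil => exact fun hv _ => hv
    | @cons v v' w hvv' p ih =>
      intro hv hvb
      by_cases hvx : v = x
      · subst hvx
        have hv'b := hb v' hvv'
        exact ih (hv'b ▸ hvb rfl) fun _ => hvb rfl
      · exact ih (hspread v v' hvx hv hvv') fun hv'x => by
          rw [← hb v (hv'x ▸ hvv'.symm)]; exact hv
  refine (hnn u).lt_of_ne fun hu => hf.1 (funext fun w => ?_)
  obtain ⟨p⟩ := hG u w
  exact hwalk u w p hu.symm (absurd · hux)

lemma IsFlow.lt_of_adj_of_dist_lt (hG : G.IsTree) {x : V} {lam : ℝ} {g : V → ℝ} (hlam : 0 < lam)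
    (hg : IsFlow G lam x g) (hpos : ∀ v, v ≠ x → 0 < g v)
    (hmono : ∀ y z, G.Adj y z → G.dist x z < G.dist x y → g z ≤ g y)
    {y z : V} (hyz : G.Adj y z) (hd : G.dist x z < G.dist x y) : g z < g y := by
  by_contra hflat
  set S := univ.filter fun y => ∃ z, G.Adj y z ∧ G.dist x z < G.dist x y ∧ g y = g z
  have hyS : y ∈ S :=
    mem_filter.mpr ⟨mem_univ y, z, hyz, hd, (hmono y z hyz hd).antisymm' (not_lt.mp hflat)⟩
  -- a level edge farthest from `x`
  obtain ⟨y, hyS, hmax⟩ := S.exists_max_image (G.dist x) ⟨y, hyS⟩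
  obtain ⟨z, hyz, hd, hlevel⟩ := (mem_filter.mp hyS).2
  have hyx : y ≠ x := by rintro rfl; simp at hd
  have hchild : ∀ c ∈ G.neighborFinset y, c ≠ z → G.dist x y < G.dist x c := by
    intro c hc hcz
    rw [mem_neighborFinset] at hc
    rcases hG.dist_eq_dist_add_one_of_adj x hc with h | h
    · exact absurd (hG.eq_of_adj_of_dist_lt hc.symm hyz.symm (by omega) hd) hcz
    · omega
  have hle : ∀ c ∈ G.neighborFinset y, g y - g c ≤ 0 := by
    intro c hc
    by_cases hcz : c = z
    · rw [hcz, hlevel, sub_self]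
    · exact sub_nonpos.mpr (hmono c y ((mem_neighborFinset ..).mp hc).symm (hchild c hc hcz))
  -- no neighbour of `y` lies below `g y`: impossible at a leaf, and at an interior vertex it makes
  -- a farther edge level
  by_cases hyb : y ∈ bdry G
  · have hrobin := hg.2.2 y hyb hyx
    rw [lap] at hrobin
    linarith [sum_nonpos hle, mul_pos hlam (hpos y hyx)]
  · have hzero := (sum_eq_zero_iff_of_nonpos hle).mp (hg.2.1 y hyb hyx)
    have hdeg : 1 < (G.neighborFinset y).card := by
      rw [card_neighborFinset_eq_degree]
      have : 0 < G.degree y := G.degree_pos_iff_exists_adj y |>.mpr ⟨z, hyz⟩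
      have : G.degree y ≠ 1 := fun h => hyb (mem_filter.mpr ⟨mem_univ y, h⟩)
      omega
    obtain ⟨c, hc, hcz⟩ := exists_mem_ne hdeg z
    have hcS : c ∈ S := mem_filter.mpr ⟨mem_univ c, y, ((mem_neighborFinset ..).mp hc).symm,
      hchild c hc hcz, by linarith [hzero c hc]⟩
    exact (hmax c hcS).not_gt (hchild c hc hcz)

lemma energy_variationFrom (hG : G.IsTree) (x : V) (f : V → ℝ) :
    energy G (hG.connected.variationFrom x f) = energy G f := by
  simp only [energy_eq_sum_sq]
  congr 1
  refine sum_congr rfl fun i _ => sum_congr rfl fun j _ => ?_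
  split_ifs with h
  · rw [← sq_abs, hG.abs_sub_variationFrom_eq_add_of_adj x f h, sq_abs]
  · rfl

lemma bdryEnergy_le_variationFrom (hG : G.Connected) {x : V} {f : V → ℝ} (hfx : f x = 0) :
    bdryEnergy G x f ≤ bdryEnergy G x (hG.variationFrom x f) := by
  refine sum_le_sum fun w _ => sq_le_sq.mpr ?_
  simpa [hfx, abs_of_nonneg (hG.variationFrom_nonneg x f w)] using
    hG.abs_sub_le_variationFrom x f w

lemma IsRayleighBound.mem_sigmaSet (hG : G.IsTree) {x : V} (hx : x ∈ bdry G) {lam : ℝ}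
    (hlam : 0 < lam) (hb : IsRayleighBound G x lam) {f : V → ℝ} (hfx : f x = 0)
    (hpos : 0 < bdryEnergy G x f) (hf : energy G f = lam * bdryEnergy G x f) :
    lam ∈ SigmaSet G x := by
  obtain ⟨g, hgx, hE, hB, hnn, hmono⟩ : ∃ g : V → ℝ, g x = 0 ∧ energy G g = energy G f ∧
      bdryEnergy G x f ≤ bdryEnergy G x g ∧ 0 ≤ g ∧
      ∀ y z, G.Adj y z → G.dist x z < G.dist x y → g z ≤ g y :=
    ⟨_, hG.connected.variationFrom_self x f, energy_variationFrom hG x f,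
      bdryEnergy_le_variationFrom hG.connected hfx, hG.connected.variationFrom_nonneg x f,
      fun y z h hd => (hG.variationFrom_eq_add_of_adj x f h.symm hd).symm ▸
        le_add_of_nonneg_right (abs_nonneg _)⟩
  have hg : energy G g = lam * bdryEnergy G x g :=
    le_antisymm (by rw [hE, hf]; gcongr) (hb g hgx)
  have hflow : IsFlow G lam x g := hb.isFlow hgx hg fun h0 => by
    have : bdryEnergy G x g = 0 := by simp [h0, bdryEnergy]
    linarith
  exact ⟨hlam.le, g, hflow, hgx, fun y z h hd => hflow.lt_of_adj_of_dist_lt hG hlam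
    (fun v hv => hflow.pos_of_nonneg hG.connected hx hnn hv) hmono h hd⟩

lemma exists_mem_bdry_ne (hG : G.IsTree) {x : V} (hx : x ∈ bdry G) : ∃ w ∈ bdry G, w ≠ x := by
  obtain ⟨y, hxy, -⟩ := degree_eq_one_iff_existsUnique_adj.mp (mem_filter.mp hx).2
  have : Nontrivial V := ⟨x, y, hxy.ne⟩
  obtain ⟨u, v, huv, hu, hv⟩ := hG.exists_ne_and_degree_eq_one
  by_cases hux : u = x
  · exact ⟨v, mem_filter.mpr ⟨mem_univ v, by convert hv⟩, hux ▸ huv.symm⟩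
  · exact ⟨u, mem_filter.mpr ⟨mem_univ u, by convert hu⟩, hux⟩

/-- For every finite tree `G` and boundary vertex `x`:
`σ(G,x) = σ̂(G,x)`. -/
theorem sigma_eq_sigmaHat (G : SimpleGraph V) (hG : G.IsTree)
    (x : V) (hx : x ∈ bdry G) :
    sigma G x = sigmaHat G x := by
  obtain ⟨w, hw, hwx⟩ := exists_mem_bdry_ne hG hx
  obtain ⟨lam, hlam, hb, f, hfx, hpos, hf⟩ := exists_isRayleighBound_attained hG.connected hw hwx
  have hmem : lam ∈ SigmaSet G x := hb.mem_sigmaSet hG hx hlam hfx hpos hf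
  have hsub : SigmaSet G x ⊆ SigmaHatSet G x := fun _ ⟨hmu, g, hg, hgx, _⟩ => ⟨hmu, g, hg, hgx⟩
  have hlow : lam ∈ lowerBounds (SigmaHatSet G x) := fun _ ⟨_, g, hg, hgx⟩ =>
    hb.le_of_isFlow hG.connected hg hgx
  rw [sigma, sigmaHat, IsLeast.csInf_eq ⟨hmem, fun _ h => hlow (hsub h)⟩,
    IsLeast.csInf_eq ⟨hsub hmem, hlow⟩]

end Steklov
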